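/- arXiv:2602.21312 — 8 statements merged into one kernel-verified Lean document; each statement's English description precedes it below -/
import Mathlib

section
/- Let A* ⊆ G be a nonempty precedence-closed subfamily with |A*| ≤ B, where B ≥ 1 is an integer budget. Then a B-greedy subfamily A exists (since for any S ∈ A* we have ⟨S⟩ ⊆ A*, so |⟨S⟩| ≤ B), and every B-greedy subfamily A satisfies Δ(A) ≥ Δ(A*)/B. In other words, the B-greedy rule is a B-approximation for the Bounded Max-Density Precedence-Closed Subfamily problem. -/
open Finset

variable {α : Type*}

def famCov [DecidableEq α] (A : Finset (Finset α)) : Finset α := A.sup id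

noncomputable def famDens [DecidableEq α] (A : Finset (Finset α)) (R : Finset α) : ℝ :=
  ((famCov A ∩ R).card : ℝ) / (A.card : ℝ)

def famClo [DecidableEq α] (G : Finset (Finset α)) (le : Finset α → Finset α → Prop)
    [DecidableRel le] (S : Finset α) : Finset (Finset α) :=
  G.filter (fun Y => le Y S)

def PrecClosed [DecidableEq α] (G : Finset (Finset α)) (le : Finset α → Finset α → Prop)
    (A : Finset (Finset α)) : Prop :=
  A ⊆ G ∧ ∀ X ∈ A, ∀ Y ∈ G, le Y X → Y ∈ A

def BGreedy [DecidableEq α] (G : Finset (Finset α)) (le : Finset α → Finset α → Prop)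
    [DecidableRel le] (B : ℕ) (R : Finset α) (A : Finset (Finset α)) : Prop :=
  ∃ S₀ ∈ G, A = famClo G le S₀ ∧ A.card ≤ B ∧
    ∀ S ∈ G, (famClo G le S).card ≤ B → famDens (famClo G le S) R ≤ famDens A R

/-- Every B-greedy subfamily is a B-approximation for
Bounded Max-Density Precedence-Closed Subfamily (and a B-greedy subfamily exists). -/
theorem stmt0 {α : Type*} [DecidableEq α]
    (U : Finset α) (G : Finset (Finset α))
    (le : Finset α → Finset α → Prop) [DecidableRel le]
    (hsub : ∀ S ∈ G, S ⊆ U)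
    (hrefl : ∀ S ∈ G, le S S)
    (htrans : ∀ X ∈ G, ∀ Y ∈ G, ∀ Z ∈ G, le X Y → le Y Z → le X Z)
    (hanti : ∀ X ∈ G, ∀ Y ∈ G, le X Y → le Y X → X = Y)
    (B : ℕ) (hB : 1 ≤ B)
    (Astar : Finset (Finset α)) (hne : Astar.Nonempty)
    (hclosed : PrecClosed G le Astar)
    (hcard : Astar.card ≤ B) :
    (∃ A, BGreedy G le B U A) ∧
      ∀ A, BGreedy G le B U A → famDens Astar U / (B : ℝ) ≤ famDens A U := by
  obtain ⟨hAG, hcl⟩ := hclosed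
  have hcloSub : ∀ S ∈ Astar, famClo G le S ⊆ Astar := by
    intro S hS Y hY
    simp only [famClo, mem_filter] at hY
    exact hcl S hS Y hY.1 hY.2
  obtain ⟨S1, hS1⟩ := hne
  have hS1G : S1 ∈ G := hAG hS1
  have hTne : (G.filter (fun S => (famClo G le S).card ≤ B)).Nonempty :=
    ⟨S1, mem_filter.mpr ⟨hS1G, le_trans (card_le_card (hcloSub S1 hS1)) hcard⟩⟩
  obtain ⟨S₀, hS₀T, hmax⟩ :=
    Finset.exists_max_image _ (fun S => famDens (famClo G le S) U) hTne
  have hS₀G := (mem_filter.mp hS₀T).1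
  have hS₀B := (mem_filter.mp hS₀T).2
  refine ⟨⟨famClo G le S₀, S₀, hS₀G, rfl, hS₀B, fun S hS hSB =>
    hmax S (mem_filter.mpr ⟨hS, hSB⟩)⟩, ?_⟩
  intro A hA
  obtain ⟨S₀', hS₀'G, hA_eq, hAB, hbest⟩ := hA
  have hAdens_ge : ∀ S ∈ Astar, famDens (famClo G le S) U ≤ famDens A U := fun S hS =>
    hbest S (hAG hS) (le_trans (card_le_card (hcloSub S hS)) hcard)
  have hAdensNN : (0:ℝ) ≤ famDens A U := by
    refine le_trans ?_ (hAdens_ge S1 hS1)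
    unfold famDens
    positivity
  have hcovSub : famCov Astar ∩ U ⊆ Astar.biUnion (fun S => famCov (famClo G le S) ∩ U) := by
    intro x hx
    obtain ⟨hx1, hx2⟩ := mem_inter.mp hx
    obtain ⟨S, hS, hxS⟩ := mem_sup.mp hx1
    refine mem_biUnion.mpr ⟨S, hS, mem_inter.mpr ⟨?_, hx2⟩⟩
    exact mem_sup.mpr ⟨S, mem_filter.mpr ⟨hAG hS, hrefl S (hAG hS)⟩, hxS⟩
  have h2 : ∀ S ∈ Astar, ((famCov (famClo G le S) ∩ U).card : ℝ) ≤ famDens A U * B := by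
    intro S hS
    have hne' : (famClo G le S).Nonempty :=
      ⟨S, mem_filter.mpr ⟨hAG hS, hrefl S (hAG hS)⟩⟩
    have hcpos : (0:ℝ) < ((famClo G le S).card : ℝ) := by
      exact_mod_cast card_pos.mpr hne'
    have heq : ((famCov (famClo G le S) ∩ U).card : ℝ)
        = famDens (famClo G le S) U * ((famClo G le S).card : ℝ) := by
      unfold famDens; field_simp
    rw [heq]
    have hcB : ((famClo G le S).card : ℝ) ≤ (B : ℝ) := by
      exact_mod_cast le_trans (card_le_card (hcloSub S hS)) hcard
    exact mul_le_mul (hAdens_ge S hS) hcB (le_of_lt hcpos) hAdensNN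
  have h1 : ((famCov Astar ∩ U).card : ℝ) ≤ (Astar.card : ℝ) * (famDens A U * B) := by
    calc ((famCov Astar ∩ U).card : ℝ)
        ≤ ((Astar.biUnion (fun S => famCov (famClo G le S) ∩ U)).card : ℝ) := by
          exact_mod_cast card_le_card hcovSub
      _ ≤ ∑ S ∈ Astar, ((famCov (famClo G le S) ∩ U).card : ℝ) := by
          exact_mod_cast card_biUnion_le
      _ ≤ ∑ _S ∈ Astar, (famDens A U * B) := Finset.sum_le_sum h2
      _ = (Astar.card : ℝ) * (famDens A U * B) := by
          rw [Finset.sum_const, nsmul_eq_mul]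
  have hApos : (0:ℝ) < (Astar.card : ℝ) := by
    exact_mod_cast card_pos.mpr ⟨S1, hS1⟩
  have hBpos : (0:ℝ) < (B : ℝ) := by exact_mod_cast hB
  unfold famDens
  rw [div_div, div_le_iff₀ (by positivity)]
  calc ((famCov Astar ∩ U).card : ℝ) ≤ (Astar.card : ℝ) * (famDens A U * B) := h1
    _ = (famCov A ∩ U).card / (A.card : ℝ) * ((Astar.card : ℝ) * (B : ℝ)) := by
        unfold famDens; ring
end

section
/- Assume G is nonempty and satisfies ε-shallow ancestry with constants C ≥ 1 and ε ∈ (0,1). Let A = ⟨S₀⟩ where S₀ ∈ G maximizes Δ(⟨S⟩) over all S ∈ G. Then for every nonempty precedence-closed subfamily A* ⊆ G, Δ(A*) ≤ C^{1/(1-ε)} · n^ε · Δ(A); i.e., this greedy solution is an O(n^ε)-approximation for the Max-Density Precedence-Closed Subfamily problem. -/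
open Finset

variable {α : Type*}

/-- Under ε-shallow ancestry, the greedy max-density closure is an
O(n^ε)-approximation for Max-Density Precedence-Closed Subfamily. -/
theorem stmt2 {α : Type*} [DecidableEq α]
    (U : Finset α) (G : Finset (Finset α))
    (le : Finset α → Finset α → Prop) [DecidableRel le]
    (hsub : ∀ S ∈ G, S ⊆ U)
    (hrefl : ∀ S ∈ G, le S S)
    (htrans : ∀ X ∈ G, ∀ Y ∈ G, ∀ Z ∈ G, le X Y → le Y Z → le X Z)
    (hanti : ∀ X ∈ G, ∀ Y ∈ G, le X Y → le Y X → X = Y)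
    (hGne : G.Nonempty)
    (C ε : ℝ) (hC : 1 ≤ C) (hε : ε ∈ Set.Ioo (0 : ℝ) 1)
    (hshallow : ∀ S ∈ G,
      ((famClo G le S).card : ℝ) ≤ C * ((famCov (famClo G le S)).card : ℝ) ^ ε)
    (S₀ : Finset α) (hS₀ : S₀ ∈ G)
    (hmax : ∀ S ∈ G, famDens (famClo G le S) U ≤ famDens (famClo G le S₀) U) :
    ∀ Astar : Finset (Finset α), Astar.Nonempty → PrecClosed G le Astar →
      famDens Astar U ≤
        C ^ ((1 : ℝ) / (1 - ε)) * ((U.card : ℝ)) ^ ε * famDens (famClo G le S₀) U := by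
  intro Astar hne hclosed
  obtain ⟨hsubG, hcl⟩ := hclosed
  set D := famDens (famClo G le S₀) U with hD
  have hD0 : 0 ≤ D := div_nonneg (by positivity) (by positivity)
  have hnε : (0:ℝ) ≤ ((U.card : ℝ)) ^ ε := Real.rpow_nonneg (by positivity) _
  have key : ∀ S ∈ Astar,
      ((famCov (famClo G le S) ∩ U).card : ℝ) ≤ C * ((U.card : ℝ)) ^ ε * D := by
    intro S hS
    have hSG := hsubG hS
    have hSclo : S ∈ famClo G le S := by
      simp [famClo, hSG, hrefl S hSG]
    have hcard_pos : 0 < ((famClo G le S).card : ℝ) := by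
      exact_mod_cast card_pos.mpr ⟨S, hSclo⟩
    have hdens := hmax S hSG
    have hcovU : famCov (famClo G le S) ⊆ U := by
      intro x hx
      obtain ⟨T, hT, hxT⟩ := mem_sup.mp hx
      exact hsub T (mem_filter.mp hT).1 hxT
    have hcovcard : ((famCov (famClo G le S)).card : ℝ) ≤ (U.card : ℝ) := by
      exact_mod_cast card_le_card hcovU
    have hclo_le : ((famClo G le S).card : ℝ) ≤ C * ((U.card : ℝ)) ^ ε := by
      calc ((famClo G le S).card : ℝ)
          ≤ C * ((famCov (famClo G le S)).card : ℝ) ^ ε := hshallow S hSG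
        _ ≤ C * ((U.card : ℝ)) ^ ε := by
            have := Real.rpow_le_rpow (by positivity) hcovcard hε.1.le
            nlinarith
    have heq : ((famCov (famClo G le S) ∩ U).card : ℝ)
        = famDens (famClo G le S) U * ((famClo G le S).card : ℝ) := by
      rw [famDens, div_mul_cancel₀]
      exact ne_of_gt hcard_pos
    rw [heq]
    calc famDens (famClo G le S) U * ((famClo G le S).card : ℝ)
        ≤ D * ((famClo G le S).card : ℝ) :=
          mul_le_mul_of_nonneg_right hdens hcard_pos.le
      _ ≤ D * (C * ((U.card : ℝ)) ^ ε) := mul_le_mul_of_nonneg_left hclo_le hD0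
      _ = C * ((U.card : ℝ)) ^ ε * D := by ring
  have hcov : ((famCov Astar ∩ U).card : ℝ)
      ≤ (Astar.card : ℝ) * (C * ((U.card : ℝ)) ^ ε * D) := by
    have hsubset : famCov Astar ∩ U ⊆
        Astar.biUnion (fun S => famCov (famClo G le S) ∩ U) := by
      intro x hx
      obtain ⟨hx1, hx2⟩ := mem_inter.mp hx
      obtain ⟨S, hS, hxS⟩ := mem_sup.mp hx1
      refine mem_biUnion.mpr ⟨S, hS, mem_inter.mpr ⟨?_, hx2⟩⟩
      have hSclo : S ∈ famClo G le S := by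
        simp [famClo, hsubG hS, hrefl S (hsubG hS)]
      exact mem_sup.mpr ⟨S, hSclo, hxS⟩
    calc ((famCov Astar ∩ U).card : ℝ)
        ≤ ((Astar.biUnion (fun S => famCov (famClo G le S) ∩ U)).card : ℝ) := by
          exact_mod_cast card_le_card hsubset
      _ ≤ ∑ S ∈ Astar, ((famCov (famClo G le S) ∩ U).card : ℝ) := by
          exact_mod_cast card_biUnion_le
      _ ≤ ∑ S ∈ Astar, (C * ((U.card : ℝ)) ^ ε * D) := Finset.sum_le_sum key
      _ = (Astar.card : ℝ) * (C * ((U.card : ℝ)) ^ ε * D) := by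
          rw [Finset.sum_const, nsmul_eq_mul]
  have hApos : 0 < (Astar.card : ℝ) := by exact_mod_cast card_pos.mpr hne
  have h1 : famDens Astar U ≤ C * ((U.card : ℝ)) ^ ε * D := by
    rw [famDens, div_le_iff₀ hApos]
    linarith
  have hCle : C ≤ C ^ ((1 : ℝ) / (1 - ε)) := by
    calc C = C ^ (1 : ℝ) := (Real.rpow_one C).symm
      _ ≤ C ^ ((1 : ℝ) / (1 - ε)) := by
          apply Real.rpow_le_rpow_of_exponent_le hC
          rw [le_div_iff₀ (by linarith [hε.2])]
          nlinarith [hε.1, hε.2]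
  calc famDens Astar U ≤ C * ((U.card : ℝ)) ^ ε * D := h1
    _ ≤ C ^ ((1 : ℝ) / (1 - ε)) * ((U.card : ℝ)) ^ ε * D := by
        have := mul_le_mul_of_nonneg_right (mul_le_mul_of_nonneg_right hCle hnε) hD0
        linarith
end

section
/- |U| ≥ (4/5)·|H|, i.e., at least a 4/5-fraction of the hypotheses lie in some reply of size at most (3/4)·|H| of some test. -/
open Finset

/-- A test is a partition of `H` into nonempty parts (replies). -/
def IsTest {α : Type*} [DecidableEq α] (H : Finset α) (t : Finset (Finset α)) : Prop :=
  (∀ R ∈ t, R.Nonempty) ∧ (∀ R ∈ t, ∀ R' ∈ t, R ≠ R' → Disjoint R R') ∧ t.sup id = H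

/-- The tests separate the hypotheses. -/
def Separates {α : Type*} (H : Finset α) (T : Finset (Finset (Finset α))) : Prop :=
  ∀ h₁ ∈ H, ∀ h₂ ∈ H, h₁ ≠ h₂ → ∃ t ∈ T, ∃ R ∈ t, h₁ ∈ R ∧ h₂ ∉ R

/-- ξ(t): hypotheses lying in some reply of `t` of size at most (3/4)·|H|. -/
def xiT {α : Type*} [DecidableEq α] (H : Finset α) (t : Finset (Finset α)) : Finset α :=
  H.filter (fun h => ∃ R ∈ t, h ∈ R ∧ 4 * R.card ≤ 3 * H.card)

/-- |U| ≥ (4/5)·|H|. -/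
theorem stmt3 {α : Type*} [DecidableEq α]
    (H : Finset α) (hH : 2 ≤ H.card)
    (T : Finset (Finset (Finset α)))
    (htest : ∀ t ∈ T, IsTest H t)
    (hsep : Separates H T) :
    4 * H.card ≤ 5 * (T.sup (xiT H)).card := by
  set U := T.sup (xiT H) with hUdef
  have hUsub : U ⊆ H := by
    intro x hx
    rw [hUdef] at hx
    obtain ⟨t, ht, hx⟩ := Finset.mem_sup.mp hx
    exact Finset.filter_subset _ _ hx
  by_cases hcase : H ⊆ U
  · have hEq : U = H := Finset.Subset.antisymm hUsub hcase
    rw [hEq]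
    omega
  · obtain ⟨h, hhH, hhU⟩ := Finset.not_subset.mp hcase
    -- h is in no small reply, for any test of T
    have hbig : ∀ t ∈ T, ∀ R ∈ t, h ∈ R → 3 * H.card < 4 * R.card := by
      intro t htT R hRt hhR
      by_contra hle
      push_neg at hle
      exact hhU (Finset.mem_sup.mpr ⟨t, htT,
        Finset.mem_filter.mpr ⟨hhH, R, hRt, hhR, hle⟩⟩)
    -- every other hypothesis lies in U
    have hA : H.erase h ⊆ U := by
      intro h'' hh''
      obtain ⟨hne'', hh''H⟩ := Finset.mem_erase.mp hh''
      obtain ⟨t, htT, R, hRt, hhR, hh''R⟩ := hsep h hhH h'' hh''H (Ne.symm hne'')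
      obtain ⟨-, hdisj, hcover⟩ := htest t htT
      have hh''H' : h'' ∈ t.sup id := by rw [hcover]; exact hh''H
      obtain ⟨R', hR't, hh''R'⟩ := Finset.mem_sup.mp hh''H'
      have hRne : R ≠ R' := fun e => hh''R (e ▸ hh''R')
      have hd : Disjoint R R' := hdisj R hRt R' hR't hRne
      have hsub : R ∪ R' ⊆ H := by
        rw [← hcover]
        exact Finset.union_subset (Finset.le_sup (f := id) hRt)
          (Finset.le_sup (f := id) hR't)
      have hcards : R.card + R'.card ≤ H.card := by
        rw [← Finset.card_union_of_disjoint hd]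
        exact Finset.card_le_card hsub
      have hRbig := hbig t htT R hRt hhR
      have hsmall : 4 * R'.card ≤ 3 * H.card := by omega
      exact Finset.mem_sup.mpr ⟨t, htT,
        Finset.mem_filter.mpr ⟨hh''H, R', hR't, hh''R', hsmall⟩⟩
    have hUcard : H.card - 1 ≤ U.card := by
      have := Finset.card_le_card hA
      rwa [Finset.card_erase_of_mem hhH] at this
    -- now show |H| ≥ 5
    obtain ⟨h', hh'H, hne⟩ := Finset.exists_mem_ne (show 1 < H.card by omega) h
    obtain ⟨t, htT, R, hRt, hhR, hh'R⟩ := hsep h hhH h' hh'H (Ne.symm hne)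
    obtain ⟨-, -, hcover⟩ := htest t htT
    have hRH : R ⊆ H := by rw [← hcover]; exact Finset.le_sup (f := id) hRt
    have hRlt : R.card < H.card :=
      Finset.card_lt_card ⟨hRH, fun hsub => hh'R (hsub hh'H)⟩
    have hRbig := hbig t htT R hRt hhR
    omega
end

section
/- |H ∖ U| ≤ 1, i.e., at most one hypothesis h has the property that for every test t ∈ T, the reply of t containing h has size greater than (3/4)·|H|. -/
open Finset

/-- |H ∖ U| ≤ 1. -/
theorem stmt4 {α : Type*} [DecidableEq α]
    (H : Finset α) (hH : 2 ≤ H.card)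
    (T : Finset (Finset (Finset α)))
    (htest : ∀ t ∈ T, IsTest H t)
    (hsep : Separates H T) :
    (H \ T.sup (xiT H)).card ≤ 1 := by
  rw [Finset.card_le_one]
  intro a ha b hb
  by_contra hab
  simp only [Finset.mem_sdiff, Finset.mem_sup] at ha hb
  obtain ⟨haH, haU⟩ := ha
  obtain ⟨hbH, hbU⟩ := hb
  obtain ⟨t, htT, R, hRt, haR, hbR⟩ := hsep a haH b hbH hab
  obtain ⟨hne, hdisj, hsup⟩ := htest t htT
  -- b lies in some reply R' of t
  have hbH' : b ∈ t.sup id := hsup ▸ hbH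
  rw [Finset.mem_sup] at hbH'
  obtain ⟨R', hR't, hbR'⟩ := hbH'
  have hRR' : R ≠ R' := fun h => hbR (h ▸ hbR')
  -- a ∉ xiT H t, so R is big
  have haxi : a ∉ xiT H t := fun h => haU ⟨t, htT, h⟩
  have hbxi : b ∉ xiT H t := fun h => hbU ⟨t, htT, h⟩
  simp only [xiT, Finset.mem_filter, not_and, not_exists] at haxi hbxi
  have hRbig : 3 * H.card < 4 * R.card := by
    have := haxi haH R hRt
    push_neg at this
    exact this haR
  have hR'big : 3 * H.card < 4 * R'.card := by
    have := hbxi hbH R' hR't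
    push_neg at this
    exact this hbR'
  have hd : Disjoint R R' := hdisj R hRt R' hR't hRR'
  have hsub : R ∪ R' ⊆ H := by
    intro x hx
    rw [← hsup, Finset.mem_sup]
    rcases Finset.mem_union.mp hx with h | h
    · exact ⟨R, hRt, h⟩
    · exact ⟨R', hR't, h⟩
  have hcard : R.card + R'.card ≤ H.card := by
    rw [← Finset.card_union_of_disjoint hd]
    exact Finset.card_le_card hsub
  omega
end

section
/- Fix an integer budget B ≥ 1 and consider the greedy process C₀ = ∅ and C_{i+1} = C_i ∪ A_{i+1}, where A_{i+1} is a B-greedy subfamily of the residual instance (U ∖ cov(C_i), G ∖ C_i) with respect to R = U ∖ cov(C_i), run as long as |C_i| < √(m·H_n)·B and some such B-greedy subfamily exists (i.e., some S ∈ G ∖ C_i has residual closure of size at most B). Let C be the final family produced. Then C is precedence-closed in (G, ≼), |C| ≤ (√(m·H_n)+1)·B, and |cov(C)| ≥ max{|cov(C')| : C' ⊆ G precedence-closed, |C'| ≤ B}. That is, the iterated B-greedy procedure is a (√(m·H_n)+1, 1)-bicriteria approximation for Budgeted Precedence Constrained Set Cover. -/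
open Finset

variable {α : Type*}

lemma mem_famCov [DecidableEq α] {A : Finset (Finset α)} {x : α} :
    x ∈ famCov A ↔ ∃ S ∈ A, x ∈ S := by
  simp [famCov, Finset.mem_sup]

lemma famCov_union [DecidableEq α] (A B : Finset (Finset α)) :
    famCov (A ∪ B) = famCov A ∪ famCov B := Finset.sup_union

lemma famCov_mono [DecidableEq α] {A B : Finset (Finset α)} (h : A ⊆ B) :
    famCov A ⊆ famCov B := Finset.le_iff_subset.1 (Finset.sup_mono h)

noncomputable def Hh (k : ℕ) : ℝ := ∑ j ∈ Finset.range k, (1 : ℝ) / (j + 1)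

lemma Hh_mono {a b : ℕ} (h : a ≤ b) : Hh a ≤ Hh b := by
  unfold Hh
  apply Finset.sum_le_sum_of_subset_of_nonneg (Finset.range_subset_range.2 h)
  intro j _ _; positivity

lemma Hh_one : Hh 1 = 1 := by simp [Hh]

lemma harm_lower {a b : ℕ} (hba : b ≤ a) (ha : 0 < a) :
    ((a - b : ℕ) : ℝ) ≤ (a : ℝ) * (Hh a - Hh b) := by
  have hapos : (0:ℝ) < a := by exact_mod_cast ha
  have h1 : Hh a - Hh b = ∑ j ∈ Finset.Ico b a, (1 : ℝ) / (j + 1) := by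
    rw [Hh, Hh, eq_comm, Finset.sum_Ico_eq_sub _ hba]
  have h2 : ((Finset.Ico b a).card : ℝ) * (1 / (a:ℝ)) ≤
      ∑ j ∈ Finset.Ico b a, (1:ℝ)/(j+1) := by
    have := Finset.card_nsmul_le_sum (Finset.Ico b a) (fun j => (1:ℝ)/((j:ℝ)+1)) (1/(a:ℝ))
      (fun j hj => by
        have hj' : j < a := (Finset.mem_Ico.1 hj).2
        have : ((j:ℝ)+1) ≤ (a:ℝ) := by exact_mod_cast hj'
        exact one_div_le_one_div_of_le (by positivity) this)
    simpa [nsmul_eq_mul] using this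
  rw [Nat.card_Ico] at h2
  rw [h1]
  have := mul_le_mul_of_nonneg_left h2 hapos.le
  calc ((a - b : ℕ) : ℝ) = (a:ℝ) * (((a - b:ℕ):ℝ) * (1/(a:ℝ))) := by
        field_simp
    _ ≤ (a:ℝ) * ∑ j ∈ Finset.Ico b a, (1:ℝ)/(j+1) := this

lemma step_key [DecidableEq α] (U : Finset α) (G : Finset (Finset α))
    (le : Finset α → Finset α → Prop) [DecidableRel le]
    (hsub : ∀ S ∈ G, S ⊆ U) (hrefl : ∀ S ∈ G, le S S)
    (B : ℕ) (Ci A C' : Finset (Finset α))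
    (hC'c : PrecClosed G le C') (hC'B : C'.card ≤ B)
    (hA : BGreedy (G \ Ci) le B (U \ famCov Ci) A)
    (hu : 1 ≤ (famCov C' \ famCov Ci).card) :
    (famCov C' \ famCov Ci).card * A.card
      ≤ B^2 * ((famCov (Ci ∪ A)).card - (famCov Ci).card) ∧
    (famCov Ci).card ≤ (famCov (Ci ∪ A)).card ∧ 1 ≤ A.card := by
  classical
  set R := U \ famCov Ci with hR
  set D := C' \ Ci with hD
  have hDsub : famCov C' \ famCov Ci ⊆ famCov D ∩ R := by
    intro x hx
    obtain ⟨hx1, hx2⟩ := Finset.mem_sdiff.1 hx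
    obtain ⟨S, hS, hxS⟩ := mem_famCov.1 hx1
    have hSG : S ∈ G := hC'c.1 hS
    have hSnot : S ∉ Ci := fun h => hx2 (mem_famCov.2 ⟨S, h, hxS⟩)
    refine Finset.mem_inter.2 ⟨mem_famCov.2 ⟨S, Finset.mem_sdiff.2 ⟨hS, hSnot⟩, hxS⟩, ?_⟩
    exact Finset.mem_sdiff.2 ⟨hsub S hSG hxS, hx2⟩
  have hu2 : 1 ≤ (famCov D ∩ R).card := le_trans hu (Finset.card_le_card hDsub)
  have hDne : D.Nonempty := by
    rcases Finset.eq_empty_or_nonempty D with h | h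
    · exfalso; rw [h] at hu2; simp [famCov] at hu2
    · exact h
  obtain ⟨X, hXD, hXmax⟩ := D.exists_max_image (fun Y => (Y ∩ R).card) hDne
  have hcovD : (famCov D ∩ R).card ≤ D.card * (X ∩ R).card := by
    have hsub2 : famCov D ∩ R ⊆ D.biUnion (fun Y => Y ∩ R) := by
      intro y hy
      obtain ⟨hy1, hy2⟩ := Finset.mem_inter.1 hy
      obtain ⟨S, hS, hyS⟩ := mem_famCov.1 hy1
      exact Finset.mem_biUnion.2 ⟨S, hS, Finset.mem_inter.2 ⟨hyS, hy2⟩⟩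
    calc (famCov D ∩ R).card ≤ (D.biUnion (fun Y => Y ∩ R)).card := Finset.card_le_card hsub2
      _ ≤ ∑ Y ∈ D, (Y ∩ R).card := Finset.card_biUnion_le
      _ ≤ D.card * (X ∩ R).card := by
          have := Finset.sum_le_card_nsmul D (fun Y => (Y ∩ R).card) ((X ∩ R).card)
            (fun Y hY => hXmax Y hY)
          simpa [smul_eq_mul] using this
  have hXC' : X ∈ C' := (Finset.mem_sdiff.1 hXD).1
  have hXG : X ∈ G := hC'c.1 hXC'
  have hXGCi : X ∈ G \ Ci := Finset.mem_sdiff.2 ⟨hXG, (Finset.mem_sdiff.1 hXD).2⟩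
  set K := famClo (G \ Ci) le X with hK
  have hKsub : K ⊆ D := by
    intro Y hY
    obtain ⟨hY1, hY2⟩ := Finset.mem_filter.1 hY
    obtain ⟨hYG, hYnot⟩ := Finset.mem_sdiff.1 hY1
    exact Finset.mem_sdiff.2 ⟨hC'c.2 X hXC' Y hYG hY2, hYnot⟩
  have hXK : X ∈ K := Finset.mem_filter.2 ⟨hXGCi, hrefl X hXG⟩
  have hK1 : 1 ≤ K.card := Finset.card_pos.2 ⟨X, hXK⟩
  have hDB : D.card ≤ B := le_trans (Finset.card_le_card Finset.sdiff_subset) hC'B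
  have hKB : K.card ≤ B := le_trans (Finset.card_le_card hKsub) hDB
  have hXcov : X ∩ R ⊆ famCov K ∩ R := by
    intro y hy
    obtain ⟨hy1, hy2⟩ := Finset.mem_inter.1 hy
    exact Finset.mem_inter.2 ⟨mem_famCov.2 ⟨X, hXK, hy1⟩, hy2⟩
  obtain ⟨S₀, hS₀, hAeq, hAB, hmax⟩ := hA
  have hS₀G : S₀ ∈ G := (Finset.mem_sdiff.1 hS₀).1
  have hS₀A : S₀ ∈ A := by
    rw [hAeq]; exact Finset.mem_filter.2 ⟨hS₀, hrefl S₀ hS₀G⟩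
  have hA1 : 1 ≤ A.card := Finset.card_pos.2 ⟨S₀, hS₀A⟩
  have hdens : famDens K R ≤ famDens A R := hmax X hXGCi hKB
  have hcross : (famCov K ∩ R).card * A.card ≤ (famCov A ∩ R).card * K.card := by
    have hKpos : (0:ℝ) < (K.card : ℝ) := by exact_mod_cast hK1
    have hApos : (0:ℝ) < (A.card : ℝ) := by exact_mod_cast hA1
    rw [famDens, famDens, div_le_div_iff₀ hKpos hApos] at hdens
    exact_mod_cast hdens
  have hgain : (famCov Ci).card + (famCov A ∩ R).card ≤ (famCov (Ci ∪ A)).card := by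
    have hdisj : Disjoint (famCov Ci) (famCov A ∩ R) := by
      apply Finset.disjoint_left.2
      intro y hy hy2
      exact (Finset.mem_sdiff.1 (Finset.mem_inter.1 hy2).2).2 hy
    have hsub3 : famCov Ci ∪ (famCov A ∩ R) ⊆ famCov (Ci ∪ A) := by
      rw [famCov_union]
      exact Finset.union_subset_union (le_refl _) Finset.inter_subset_left
    calc (famCov Ci).card + (famCov A ∩ R).card
        = (famCov Ci ∪ (famCov A ∩ R)).card := (Finset.card_union_of_disjoint hdisj).symm
      _ ≤ (famCov (Ci ∪ A)).card := Finset.card_le_card hsub3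
  refine ⟨?_, le_trans (Nat.le_add_right _ _) hgain, hA1⟩
  have hfinal : (famCov C' \ famCov Ci).card * A.card ≤ B^2 * (famCov A ∩ R).card := by
    calc (famCov C' \ famCov Ci).card * A.card
        ≤ (famCov D ∩ R).card * A.card :=
          Nat.mul_le_mul_right _ (Finset.card_le_card hDsub)
      _ ≤ (D.card * (X ∩ R).card) * A.card := Nat.mul_le_mul_right _ hcovD
      _ = D.card * ((X ∩ R).card * A.card) := by ring
      _ ≤ D.card * ((famCov K ∩ R).card * A.card) := by
          exact Nat.mul_le_mul_left _ (Nat.mul_le_mul_right _ (Finset.card_le_card hXcov))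
      _ ≤ D.card * ((famCov A ∩ R).card * K.card) := Nat.mul_le_mul_left _ hcross
      _ ≤ B * ((famCov A ∩ R).card * B) := by
          exact Nat.mul_le_mul hDB (Nat.mul_le_mul_left _ hKB)
      _ = B^2 * (famCov A ∩ R).card := by ring
  refine le_trans hfinal (Nat.mul_le_mul_left _ ?_)
  omega

/-- The iterated B-greedy procedure is a (√(m·H_n)+1, 1)-bicriteria
approximation for Budgeted Precedence Constrained Set Cover. -/
theorem stmt7 {α : Type*} [DecidableEq α]
    (U : Finset α) (G : Finset (Finset α))
    (le : Finset α → Finset α → Prop) [DecidableRel le]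
    (hsub : ∀ S ∈ G, S ⊆ U)
    (hrefl : ∀ S ∈ G, le S S)
    (htrans : ∀ X ∈ G, ∀ Y ∈ G, ∀ Z ∈ G, le X Y → le Y Z → le X Z)
    (hanti : ∀ X ∈ G, ∀ Y ∈ G, le X Y → le Y X → X = Y)
    (B : ℕ) (hB : 1 ≤ B)
    (l : ℕ) (C : ℕ → Finset (Finset α))
    (h0 : C 0 = ∅)
    (hstep : ∀ i < l,
      ((C i).card : ℝ) <
          Real.sqrt ((G.card : ℝ) * ∑ j ∈ Finset.range U.card, (1 : ℝ) / (j + 1)) * B ∧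
        ∃ A, BGreedy (G \ C i) le B (U \ famCov (C i)) A ∧ C (i + 1) = C i ∪ A)
    (hstop : ¬ (((C l).card : ℝ) <
          Real.sqrt ((G.card : ℝ) * ∑ j ∈ Finset.range U.card, (1 : ℝ) / (j + 1)) * B ∧
        ∃ A, BGreedy (G \ C l) le B (U \ famCov (C l)) A)) :
    PrecClosed G le (C l) ∧
      ((C l).card : ℝ) ≤
        (Real.sqrt ((G.card : ℝ) * ∑ j ∈ Finset.range U.card, (1 : ℝ) / (j + 1)) + 1) * B ∧
      ∀ C' : Finset (Finset α), PrecClosed G le C' → C'.card ≤ B →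
        (famCov C').card ≤ (famCov (C l)).card := by
  classical
  have hHeq : (∑ j ∈ Finset.range U.card, (1 : ℝ) / (j + 1)) = Hh U.card := rfl
  set T : ℝ := Real.sqrt ((G.card : ℝ) * Hh U.card) with hT
  rw [hHeq] at hstep hstop ⊢
  -- Part 1 : closedness of every C i, i ≤ l
  have hclosed : ∀ i, i ≤ l → PrecClosed G le (C i) := by
    intro i
    induction i with
    | zero =>
      intro _
      rw [h0]
      exact ⟨Finset.empty_subset _, fun X hX => absurd hX (Finset.notMem_empty X)⟩
    | succ k ih =>
      intro hk1
      have hkl : k < l := Nat.lt_of_succ_le hk1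
      have ihk := ih hkl.le
      obtain ⟨-, A, hA, hCeq⟩ := hstep k hkl
      obtain ⟨S₀, hS₀, hAeq, -, -⟩ := hA
      have hS₀G : S₀ ∈ G := (Finset.mem_sdiff.1 hS₀).1
      rw [hCeq]
      constructor
      · apply Finset.union_subset ihk.1
        rw [hAeq]
        intro Y hY
        exact (Finset.mem_sdiff.1 (Finset.mem_filter.1 hY).1).1
      · intro X hX Y hYG hle
        rcases Finset.mem_union.1 hX with hX | hX
        · exact Finset.mem_union_left _ (ihk.2 X hX Y hYG hle)
        · rw [hAeq] at hX
          obtain ⟨hX1, hX2⟩ := Finset.mem_filter.1 hX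
          have hXG : X ∈ G := (Finset.mem_sdiff.1 hX1).1
          by_cases hYC : Y ∈ C k
          · exact Finset.mem_union_left _ hYC
          · refine Finset.mem_union_right _ ?_
            rw [hAeq]
            exact Finset.mem_filter.2 ⟨Finset.mem_sdiff.2 ⟨hYG, hYC⟩,
              htrans Y hYG X hXG S₀ hS₀G hle hX2⟩
  have hPC : PrecClosed G le (C l) := hclosed l le_rfl
  refine ⟨hPC, ?_, ?_⟩
  -- Part 2 : cardinality bound
  · rcases Nat.eq_zero_or_pos l with hl | hl
    · subst hl
      rw [h0]
      simp only [Finset.card_empty, Nat.cast_zero]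
      have : (0:ℝ) ≤ T := Real.sqrt_nonneg _
      have hB' : (1:ℝ) ≤ B := by exact_mod_cast hB
      nlinarith
    · obtain ⟨k, rfl⟩ : ∃ k, l = k + 1 := ⟨l - 1, by omega⟩
      obtain ⟨hck, A, hA, hCeq⟩ := hstep k (Nat.lt_succ_self k)
      obtain ⟨-, -, -, hAB, -⟩ := hA
      have h1 : (C (k+1)).card ≤ (C k).card + A.card := by
        rw [hCeq]; exact Finset.card_union_le _ _
      have h2 : ((C (k+1)).card : ℝ) ≤ ((C k).card : ℝ) + (A.card : ℝ) := by exact_mod_cast h1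
      have h3 : ((A.card : ℝ)) ≤ (B : ℝ) := by exact_mod_cast hAB
      calc ((C (k+1)).card : ℝ) ≤ ((C k).card : ℝ) + (A.card : ℝ) := h2
        _ ≤ T * B + B := by linarith
        _ = (T + 1) * B := by ring
  -- Part 3 : coverage optimality
  · intro C' hC'c hC'B
    by_cases hEA : ∃ A, BGreedy (G \ C l) le B (U \ famCov (C l)) A
    · -- stopped because cardinality grew past the threshold
      have hTcard : T * B ≤ ((C l).card : ℝ) := by
        by_contra h
        push_neg at h
        exact hstop ⟨h, hEA⟩
      by_contra hlt
      push_neg at hlt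
      set OPT := (famCov C').card with hOPT
      -- basic monotonicity
      have hCsub : ∀ i < l, C i ⊆ C (i + 1) := by
        intro i hi
        obtain ⟨-, A, -, hCeq⟩ := hstep i hi
        rw [hCeq]; exact Finset.subset_union_left
      have hCle : ∀ j, j ≤ l → ∀ i, i ≤ j → C i ⊆ C j := by
        intro j
        induction j with
        | zero => intro _ i hi; rw [Nat.le_zero.1 hi]
        | succ k ih =>
          intro hk1 i hi
          by_cases h : i = k + 1
          · rw [h]
          · have hik : i ≤ k := by omega
            exact (ih (Nat.le_of_succ_le hk1) i hik).trans (hCsub k (Nat.lt_of_succ_le hk1))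
      have hPl : ∀ i, i ≤ l → (famCov (C i)).card ≤ (famCov (C l)).card :=
        fun i hi => Finset.card_le_card (famCov_mono (hCle l le_rfl i hi))
      -- main induction : harmonic charging
      have main : ∀ i, i ≤ l → ((C i).card : ℝ) ≤
          (B:ℝ)^2 * (Hh OPT - Hh (OPT - (famCov (C i)).card)) := by
        intro i
        induction i with
        | zero =>
          intro _
          rw [h0]
          simp [famCov]
        | succ k ih =>
          intro hk1
          have hkl : k < l := Nat.lt_of_succ_le hk1
          have ih' := ih hkl.le
          obtain ⟨-, A, hA, hCeq⟩ := hstep k hkl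
          have hPkl : (famCov (C k)).card ≤ (famCov (C l)).card := hPl k hkl.le
          have hPk1l : (famCov (C (k+1))).card ≤ (famCov (C l)).card := hPl (k+1) hk1
          have hsd := Finset.card_le_card_sdiff_add_card (s := famCov C') (t := famCov (C k))
          have hu : 1 ≤ (famCov C' \ famCov (C k)).card := by omega
          obtain ⟨hkey, hmono, hA1⟩ := step_key U G le hsub hrefl B (C k) A C' hC'c hC'B hA hu
          rw [← hCeq] at hkey hmono
          have hvu : OPT - (famCov (C k)).card ≤ (famCov C' \ famCov (C k)).card := by omega
          have h1 : (OPT - (famCov (C k)).card) * A.card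
              ≤ B^2 * ((famCov (C (k+1))).card - (famCov (C k)).card) :=
            le_trans (Nat.mul_le_mul_right _ hvu) hkey
          have hg : (famCov (C (k+1))).card - (famCov (C k)).card
              = (OPT - (famCov (C k)).card) - (OPT - (famCov (C (k+1))).card) := by omega
          have hvmono : OPT - (famCov (C (k+1))).card ≤ OPT - (famCov (C k)).card := by omega
          have hvkpos : 0 < OPT - (famCov (C k)).card := by omega
          have hharm := harm_lower hvmono hvkpos
          have hvpos : (0:ℝ) < ((OPT - (famCov (C k)).card : ℕ) : ℝ) := by exact_mod_cast hvkpos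
          have hAle : (A.card : ℝ) ≤ (B:ℝ)^2 *
              (Hh (OPT - (famCov (C k)).card) - Hh (OPT - (famCov (C (k+1))).card)) := by
            have h1' : ((OPT - (famCov (C k)).card : ℕ) : ℝ) * (A.card : ℝ)
                ≤ (B:ℝ)^2 * (((OPT - (famCov (C k)).card) - (OPT - (famCov (C (k+1))).card) : ℕ) : ℝ) := by
              rw [hg] at h1
              exact_mod_cast h1
            have h2' : (B:ℝ)^2 * (((OPT - (famCov (C k)).card) - (OPT - (famCov (C (k+1))).card) : ℕ) : ℝ)
                ≤ (B:ℝ)^2 * (((OPT - (famCov (C k)).card : ℕ):ℝ) *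
                  (Hh (OPT - (famCov (C k)).card) - Hh (OPT - (famCov (C (k+1))).card))) :=
              mul_le_mul_of_nonneg_left hharm (by positivity)
            have h3' : ((OPT - (famCov (C k)).card : ℕ):ℝ) * (A.card : ℝ)
                ≤ ((OPT - (famCov (C k)).card : ℕ):ℝ) * ((B:ℝ)^2 *
                  (Hh (OPT - (famCov (C k)).card) - Hh (OPT - (famCov (C (k+1))).card))) := by
              calc ((OPT - (famCov (C k)).card : ℕ):ℝ) * (A.card : ℝ)
                  ≤ (B:ℝ)^2 * (((OPT - (famCov (C k)).card : ℕ):ℝ) *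
                    (Hh (OPT - (famCov (C k)).card) - Hh (OPT - (famCov (C (k+1))).card))) :=
                    h1'.trans h2'
                _ = ((OPT - (famCov (C k)).card : ℕ):ℝ) * ((B:ℝ)^2 *
                    (Hh (OPT - (famCov (C k)).card) - Hh (OPT - (famCov (C (k+1))).card))) := by
                    ring
            exact le_of_mul_le_mul_left h3' hvpos
          have hcard : ((C (k+1)).card : ℝ) ≤ ((C k).card : ℝ) + (A.card : ℝ) := by
            rw [hCeq]
            exact_mod_cast Finset.card_union_le _ _
          calc ((C (k+1)).card : ℝ) ≤ ((C k).card : ℝ) + (A.card : ℝ) := hcard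
            _ ≤ (B:ℝ)^2 * (Hh OPT - Hh (OPT - (famCov (C k)).card))
                + (B:ℝ)^2 * (Hh (OPT - (famCov (C k)).card) - Hh (OPT - (famCov (C (k+1))).card)) :=
                add_le_add ih' hAle
            _ = (B:ℝ)^2 * (Hh OPT - Hh (OPT - (famCov (C (k+1))).card)) := by ring
      have hfin := main l le_rfl
      have hOPT1 : 1 ≤ OPT := by omega
      have hOPTn : OPT ≤ U.card := by
        apply Finset.card_le_card
        intro x hx
        obtain ⟨S, hS, hxS⟩ := mem_famCov.1 hx
        exact hsub S (hC'c.1 hS) hxS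
      have hvl1 : 1 ≤ OPT - (famCov (C l)).card := by omega
      have hub : ((C l).card : ℝ) ≤ (B:ℝ)^2 * (Hh U.card - 1) := by
        refine hfin.trans (mul_le_mul_of_nonneg_left ?_ (by positivity))
        have hh1 : Hh OPT ≤ Hh U.card := Hh_mono hOPTn
        have hh2 : (1:ℝ) ≤ Hh (OPT - (famCov (C l)).card) := by
          rw [← Hh_one]; exact Hh_mono hvl1
        linarith
      -- lower bound from the sqrt threshold
      have hCm : (C l).card ≤ G.card := Finset.card_le_card hPC.1
      have hm1 : 1 ≤ G.card := by
        obtain ⟨x, hx⟩ := Finset.card_pos.1 hOPT1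
        obtain ⟨S, hS, -⟩ := mem_famCov.1 hx
        exact Finset.card_pos.2 ⟨S, hC'c.1 hS⟩
      have hn1 : 1 ≤ U.card := le_trans hOPT1 hOPTn
      have hHn1 : (1:ℝ) ≤ Hh U.card := by rw [← Hh_one]; exact Hh_mono hn1
      have hm0 : (0:ℝ) < (G.card : ℝ) := by exact_mod_cast hm1
      have hsB : T * B ≤ (G.card : ℝ) := hTcard.trans (by exact_mod_cast hCm)
      have hTsplit : T = Real.sqrt (G.card : ℝ) * Real.sqrt (Hh U.card) := by
        rw [hT, Real.sqrt_mul hm0.le]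
      have hsm : Real.sqrt (G.card : ℝ) * Real.sqrt (G.card : ℝ) = (G.card : ℝ) :=
        Real.mul_self_sqrt hm0.le
      have hsH : Real.sqrt (Hh U.card) * Real.sqrt (Hh U.card) = Hh U.card :=
        Real.mul_self_sqrt (by linarith)
      have hsmpos : 0 < Real.sqrt (G.card : ℝ) := Real.sqrt_pos.2 hm0
      have h1 : Real.sqrt (Hh U.card) * B ≤ Real.sqrt (G.card : ℝ) := by
        have hc : Real.sqrt (G.card : ℝ) * (Real.sqrt (Hh U.card) * B)
            ≤ Real.sqrt (G.card : ℝ) * Real.sqrt (G.card : ℝ) := by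
          rw [hsm]
          calc Real.sqrt (G.card : ℝ) * (Real.sqrt (Hh U.card) * B) = T * B := by
                rw [hTsplit]; ring
            _ ≤ (G.card : ℝ) := hsB
        exact le_of_mul_le_mul_left hc hsmpos
      have h2 : (B:ℝ)^2 * Hh U.card ≤ T * B := by
        have hkey := mul_le_mul_of_nonneg_right h1
          (mul_nonneg (Real.sqrt_nonneg (Hh U.card)) (by positivity : (0:ℝ) ≤ (B:ℝ)))
        rw [hTsplit]
        nlinarith [hkey, hsH]
      have hlb : (B:ℝ)^2 * Hh U.card ≤ ((C l).card : ℝ) := h2.trans hTcard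
      have hB2 : (1:ℝ) ≤ (B:ℝ)^2 := by
        have hB' : (1:ℝ) ≤ (B:ℝ) := by exact_mod_cast hB
        nlinarith
      have hexp : (B:ℝ)^2 * (Hh U.card - 1) = (B:ℝ)^2 * Hh U.card - (B:ℝ)^2 := by ring
      linarith
    · -- no B-greedy family exists : C' ⊆ C l
      have hsubC : C' ⊆ C l := by
        intro X hX
        by_contra hXn
        set G' := G \ C l with hG'
        set R := U \ famCov (C l) with hR'
        have hXG : X ∈ G := hC'c.1 hX
        have hXG' : X ∈ G' := Finset.mem_sdiff.2 ⟨hXG, hXn⟩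
        have hclo : famClo G' le X ⊆ C' \ C l := by
          intro Y hY
          obtain ⟨hY1, hY2⟩ := Finset.mem_filter.1 hY
          obtain ⟨hYG, hYn⟩ := Finset.mem_sdiff.1 hY1
          exact Finset.mem_sdiff.2 ⟨hC'c.2 X hX Y hYG hY2, hYn⟩
        have hcloB : (famClo G' le X).card ≤ B :=
          le_trans (Finset.card_le_card hclo)
            (le_trans (Finset.card_le_card Finset.sdiff_subset) hC'B)
        set cand := G'.filter (fun S => (famClo G' le S).card ≤ B) with hcand
        have hXcand : X ∈ cand := Finset.mem_filter.2 ⟨hXG', hcloB⟩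
        obtain ⟨S₀, hS₀c, hmax⟩ := cand.exists_max_image
          (fun S => famDens (famClo G' le S) R) ⟨X, hXcand⟩
        obtain ⟨hS₀G', hS₀B⟩ := Finset.mem_filter.1 hS₀c
        exact hEA ⟨famClo G' le S₀, S₀, hS₀G', rfl, hS₀B,
          fun S hS hSB => hmax S (Finset.mem_filter.2 ⟨hS, hSB⟩)⟩
      exact Finset.card_le_card (famCov_mono hsubC)
end

section
/- Let B ≥ 1 be an integer, R ⊆ U, and r ≥ 1 an integer. Suppose there exists a precedence-closed subfamily C' ⊆ G with |C'| ≤ B and |cov(C', R)| ≥ r. Then every B-greedy subfamily A with respect to R satisfies Δ(A, R) ≥ r/B². -/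
open Finset

variable {α : Type*}

/-- If some precedence-closed C' with |C'| ≤ B has |cov(C',R)| ≥ r,
then every B-greedy subfamily A w.r.t. R has Δ(A,R) ≥ r/B². -/
theorem stmt8 {α : Type*} [DecidableEq α]
    (U : Finset α) (G : Finset (Finset α))
    (le : Finset α → Finset α → Prop) [DecidableRel le]
    (hsub : ∀ S ∈ G, S ⊆ U)
    (hrefl : ∀ S ∈ G, le S S)
    (htrans : ∀ X ∈ G, ∀ Y ∈ G, ∀ Z ∈ G, le X Y → le Y Z → le X Z)
    (hanti : ∀ X ∈ G, ∀ Y ∈ G, le X Y → le Y X → X = Y)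
    (B : ℕ) (hB : 1 ≤ B) (R : Finset α) (hR : R ⊆ U)
    (r : ℕ) (hr : 1 ≤ r)
    (hex : ∃ C' : Finset (Finset α), PrecClosed G le C' ∧ C'.card ≤ B ∧
      r ≤ (famCov C' ∩ R).card) :
    ∀ A, BGreedy G le B R A → (r : ℝ) / ((B : ℝ) ^ 2) ≤ famDens A R := by
  obtain ⟨C', ⟨hCG, hClosed⟩, hCB, hCr⟩ := hex
  rintro A ⟨S₀, hS₀, hA, hAB, hmax⟩
  -- C' nonempty
  have hCne : C'.Nonempty := by
    rcases C'.eq_empty_or_nonempty with h | h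
    · subst h
      simp [famCov] at hCr
      omega
    · exact h
  -- card of coverage ≤ sum of cards
  have hsum : (famCov C' ∩ R).card ≤ ∑ X ∈ C', (X ∩ R).card := by
    have h1 : famCov C' ∩ R ⊆ C'.biUnion (fun X => X ∩ R) := by
      intro a ha
      simp only [mem_inter, famCov, mem_sup, id_eq] at ha
      obtain ⟨⟨X, hX, haX⟩, haR⟩ := ha
      exact mem_biUnion.2 ⟨X, hX, mem_inter.2 ⟨haX, haR⟩⟩
    calc (famCov C' ∩ R).card ≤ (C'.biUnion (fun X => X ∩ R)).card := card_le_card h1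
      _ ≤ ∑ X ∈ C', (X ∩ R).card := card_biUnion_le
  obtain ⟨X, hXC, hXmax⟩ := C'.exists_max_image (fun X => (X ∩ R).card) hCne
  have hsum2 : ∑ X ∈ C', (X ∩ R).card ≤ C'.card * (X ∩ R).card := by
    calc ∑ Y ∈ C', (Y ∩ R).card ≤ ∑ _Y ∈ C', (X ∩ R).card :=
          Finset.sum_le_sum (fun Y hY => hXmax Y hY)
      _ = C'.card * (X ∩ R).card := by rw [Finset.sum_const, smul_eq_mul]
  have hrB : r ≤ B * (X ∩ R).card := by
    have := hCr.trans (hsum.trans hsum2)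
    calc r ≤ C'.card * (X ∩ R).card := this
      _ ≤ B * (X ∩ R).card := Nat.mul_le_mul_right _ hCB
  have hXG : X ∈ G := hCG hXC
  set D := famClo G le X with hD
  have hXD : X ∈ D := by
    simp [hD, famClo, mem_filter]
    exact ⟨hXG, hrefl X hXG⟩
  have hDC : D ⊆ C' := by
    intro Y hY
    simp only [hD, famClo, mem_filter] at hY
    exact hClosed X hXC Y hY.1 hY.2
  have hDB : D.card ≤ B := le_trans (card_le_card hDC) hCB
  have hDpos : 0 < D.card := card_pos.2 ⟨X, hXD⟩
  have hcovD : (X ∩ R).card ≤ (famCov D ∩ R).card := by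
    apply card_le_card
    intro a ha
    rw [mem_inter] at ha ⊢
    refine ⟨?_, ha.2⟩
    exact (Finset.le_sup (f := id) hXD : X ⊆ famCov D) ha.1
  have key : (r : ℝ) / ((B : ℝ) ^ 2) ≤ famDens D R := by
    rw [famDens, div_le_div_iff₀ (by positivity) (by exact_mod_cast hDpos)]
    have h1 : (r : ℝ) ≤ (B : ℝ) * ((X ∩ R).card : ℝ) := by exact_mod_cast hrB
    have h2 : ((X ∩ R).card : ℝ) ≤ ((famCov D ∩ R).card : ℝ) := by exact_mod_cast hcovD
    have h3 : (D.card : ℝ) ≤ (B : ℝ) := by exact_mod_cast hDB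
    have h4 : (0:ℝ) < D.card := by exact_mod_cast hDpos
    nlinarith [(Nat.cast_nonneg ((X ∩ R).card) : (0:ℝ) ≤ ((X ∩ R).card : ℝ))]
  exact key.trans (hmax X hXG hDB)
end

section
/- Let γ ≥ 1 be a real number and let k be an integer with 1 ≤ k ≤ n. Assume there exists a precedence-closed C* ⊆ G with |cov(C*)| ≥ k, and let OPT be the minimum size of such a family. Consider any process C₀ = ∅ and C_{i+1} = C_i ∪ A_{i+1}, run while |cov(C_i)| < k/2, where each A_{i+1} ⊆ G ∖ C_i is nonempty, precedence-closed in the residual order on G ∖ C_i, and γ-approximately densest: Δ(A_{i+1}, U ∖ cov(C_i)) ≥ (1/γ)·Δ(A', U ∖ cov(C_i)) for every nonempty subfamily A' ⊆ G ∖ C_i that is precedence-closed in the residual order. Then the process terminates, and its final family C is precedence-closed in (G, ≼), satisfies |cov(C)| ≥ k/2, and |C| ≤ (4·γ·n/k)·OPT. That is, greedy iteration of a γ-approximate max-density oracle yields a (4γ/f, 2)-bicriteria approximation for Precedence Constrained Set Cover with f = k/n. -/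
open Finset

variable {α : Type*}

/-- Greedy iteration of a γ-approximate max-density oracle yields a
(4γ/f, 2)-bicriteria approximation for Precedence Constrained Set Cover, f = k/n. -/
theorem stmt9 {α : Type*} [DecidableEq α]
    (U : Finset α) (G : Finset (Finset α))
    (le : Finset α → Finset α → Prop)
    (hsub : ∀ S ∈ G, S ⊆ U)
    (hrefl : ∀ S ∈ G, le S S)
    (htrans : ∀ X ∈ G, ∀ Y ∈ G, ∀ Z ∈ G, le X Y → le Y Z → le X Z)
    (hanti : ∀ X ∈ G, ∀ Y ∈ G, le X Y → le Y X → X = Y)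
    (γ : ℝ) (hγ : 1 ≤ γ)
    (k : ℕ) (hk1 : 1 ≤ k) (hkn : k ≤ U.card)
    (OPT : ℕ)
    (hOPTex : ∃ Cs : Finset (Finset α), PrecClosed G le Cs ∧ k ≤ (famCov Cs).card ∧
      Cs.card = OPT)
    (hOPTmin : ∀ Cs : Finset (Finset α), PrecClosed G le Cs → k ≤ (famCov Cs).card →
      OPT ≤ Cs.card)
    (C : ℕ → Finset (Finset α))
    (h0 : C 0 = ∅)
    (hstep : ∀ i, 2 * (famCov (C i)).card < k →
      ∃ A : Finset (Finset α), A ⊆ G \ C i ∧ A.Nonempty ∧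
        (∀ X ∈ A, ∀ Y ∈ G \ C i, le Y X → Y ∈ A) ∧
        (∀ A' : Finset (Finset α), A' ⊆ G \ C i → A'.Nonempty →
          (∀ X ∈ A', ∀ Y ∈ G \ C i, le Y X → Y ∈ A') →
          famDens A' (U \ famCov (C i)) ≤ γ * famDens A (U \ famCov (C i))) ∧
        C (i + 1) = C i ∪ A) :
    ∃ l : ℕ, (∀ j < l, 2 * (famCov (C j)).card < k) ∧ k ≤ 2 * (famCov (C l)).card ∧
      PrecClosed G le (C l) ∧
      ((C l).card : ℝ) ≤ 4 * γ * (U.card : ℝ) / (k : ℝ) * (OPT : ℝ) := by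
  classical
  obtain ⟨Cs, hCsC, hCsk, hCsOPT⟩ := hOPTex
  have hCsne : Cs.Nonempty := by
    rcases Cs.eq_empty_or_nonempty with h | h
    · rw [h] at hCsk; simp [famCov] at hCsk; omega
    · exact h
  have hOPTpos : 0 < OPT := hCsOPT ▸ Finset.card_pos.mpr hCsne
  have hcovsub : ∀ B : Finset (Finset α), B ⊆ G → famCov B ⊆ U := fun B hB =>
    Finset.sup_le (fun S hS => hsub S (hB hS))
  have main : ∀ i, (∀ j < i, 2 * (famCov (C j)).card < k) →
      PrecClosed G le (C i) ∧ i ≤ (C i).card ∧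
      ((C i).card : ℝ) * k ≤ 2 * γ * OPT * ((famCov (C i)).card : ℝ) := by
    intro i
    induction i with
    | zero =>
      intro _
      refine ⟨⟨by simp [h0], by simp [h0]⟩, by simp, ?_⟩
      simp [h0, famCov]
    | succ i ih =>
      intro hall
      have hcond : 2 * (famCov (C i)).card < k := hall i (Nat.lt_succ_self i)
      obtain ⟨hPC, hlei, hinv⟩ := ih (fun j hj => hall j (hj.trans (Nat.lt_succ_self i)))
      obtain ⟨A, hAsub, hAne, hAclosed, hAoracle, hCstep⟩ := hstep i hcond
      set R := U \ famCov (C i) with hRdef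
      have hAG : A ⊆ G := hAsub.trans Finset.sdiff_subset
      -- the competitor A' = Cs \ C i
      have hA'sub : Cs \ C i ⊆ G \ C i := by
        intro X hX
        rw [Finset.mem_sdiff] at hX ⊢
        exact ⟨hCsC.1 hX.1, hX.2⟩
      have hA'ne : (Cs \ C i).Nonempty := by
        rw [Finset.sdiff_nonempty]
        intro hsubs
        have hmono : famCov Cs ⊆ famCov (C i) := Finset.le_iff_subset.mp (Finset.sup_mono hsubs)
        have := Finset.card_le_card hmono
        omega
      have hA'closed : ∀ X ∈ Cs \ C i, ∀ Y ∈ G \ C i, le Y X → Y ∈ Cs \ C i := by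
        intro X hX Y hY hle'
        rw [Finset.mem_sdiff] at hX hY ⊢
        exact ⟨hCsC.2 X hX.1 Y hY.1 hle', hY.2⟩
      have hdens := hAoracle (Cs \ C i) hA'sub hA'ne hA'closed
      -- coverage of the competitor on R is large
      have hsubset1 : famCov Cs \ famCov (C i) ⊆ famCov (Cs \ C i) ∩ R := by
        intro u hu
        rw [Finset.mem_sdiff] at hu
        obtain ⟨X, hXCs, hXu⟩ := Finset.mem_sup.mp hu.1
        rw [Finset.mem_inter, hRdef, Finset.mem_sdiff]
        refine ⟨Finset.mem_sup.mpr ⟨X, ?_, hXu⟩, hcovsub Cs hCsC.1 hu.1, hu.2⟩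
        rw [Finset.mem_sdiff]
        exact ⟨hXCs, fun hXC => hu.2 (Finset.mem_sup.mpr ⟨X, hXC, hXu⟩)⟩
      have hcard1n : k ≤ (famCov (Cs \ C i) ∩ R).card + (famCov (C i)).card := by
        have h1 : (famCov Cs).card ≤ (famCov Cs \ famCov (C i)).card + (famCov (C i)).card := by
          have := Finset.card_sdiff_add_card (famCov Cs) (famCov (C i))
          have h2 : (famCov Cs).card ≤ (famCov Cs ∪ famCov (C i)).card :=
            Finset.card_le_card Finset.subset_union_left
          omega
        have h2 : (famCov Cs \ famCov (C i)).card ≤ (famCov (Cs \ C i) ∩ R).card :=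
          Finset.card_le_card hsubset1
        omega
      -- real abbreviations
      have ha : (0 : ℝ) < A.card := by exact_mod_cast Finset.card_pos.mpr hAne
      have ha' : (0 : ℝ) < (Cs \ C i).card := by exact_mod_cast Finset.card_pos.mpr hA'ne
      have ha'O : ((Cs \ C i).card : ℝ) ≤ OPT := by
        have := Finset.card_le_card (Finset.sdiff_subset (s := Cs) (t := C i))
        rw [hCsOPT] at this
        exact_mod_cast this
      have hcA' : (k : ℝ) - ((famCov (C i)).card : ℝ) ≤ ((famCov (Cs \ C i) ∩ R).card : ℝ) := by
        have h' : (k : ℝ) ≤ ((famCov (Cs \ C i) ∩ R).card : ℝ) + ((famCov (C i)).card : ℝ) := by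
          exact_mod_cast hcard1n
        linarith
      have h2v : 2 * ((famCov (C i)).card : ℝ) < k := by exact_mod_cast hcond
      have hdens' : ((famCov (Cs \ C i) ∩ R).card : ℝ) / ((Cs \ C i).card : ℝ) ≤
          γ * ((famCov A ∩ R).card : ℝ) / (A.card : ℝ) := by
        have := hdens
        unfold famDens at this
        rw [mul_div_assoc]
        exact this
      have h3 : ((famCov (Cs \ C i) ∩ R).card : ℝ) * (A.card : ℝ) ≤
          γ * ((famCov A ∩ R).card : ℝ) * ((Cs \ C i).card : ℝ) :=
        (div_le_div_iff₀ ha' ha).mp hdens'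
      have hcAnn : (0 : ℝ) ≤ ((famCov A ∩ R).card : ℝ) := by positivity
      have hγcA : (0 : ℝ) ≤ γ * ((famCov A ∩ R).card : ℝ) := by
        apply mul_nonneg (by linarith) hcAnn
      have hstep1 : (A.card : ℝ) * k ≤ 2 * γ * OPT * ((famCov A ∩ R).card : ℝ) := by
        have t1 : ((k : ℝ) - ((famCov (C i)).card : ℝ)) * (A.card : ℝ) ≤
            ((famCov (Cs \ C i) ∩ R).card : ℝ) * (A.card : ℝ) :=
          mul_le_mul_of_nonneg_right hcA' ha.le
        have t3 : γ * ((famCov A ∩ R).card : ℝ) * ((Cs \ C i).card : ℝ) ≤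
            γ * ((famCov A ∩ R).card : ℝ) * (OPT : ℝ) :=
          mul_le_mul_of_nonneg_left ha'O hγcA
        nlinarith [t1, h3, t3, mul_le_mul_of_nonneg_right h2v.le ha.le]
      -- coverage and cardinality bookkeeping
      have hAR : famCov A ∩ R = famCov A \ famCov (C i) := by
        ext u
        simp only [hRdef, Finset.mem_inter, Finset.mem_sdiff]
        constructor
        · rintro ⟨h1, _, h3'⟩; exact ⟨h1, h3'⟩
        · rintro ⟨h1, h2'⟩; exact ⟨h1, hcovsub A hAG h1, h2'⟩
      have hcovn : (famCov (C (i + 1))).card =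
          (famCov (C i)).card + (famCov A ∩ R).card := by
        rw [hCstep, famCov, Finset.sup_union, hAR]
        have h1 := Finset.card_sdiff_add_card (famCov A) (famCov (C i))
        have h2 : (C i).sup id ⊔ A.sup id = famCov A ∪ famCov (C i) := by
          rw [Finset.sup_eq_union, Finset.union_comm]; rfl
        rw [h2]
        unfold famCov at h1 ⊢
        omega
      have hdisj : Disjoint (C i) A := by
        rw [Finset.disjoint_left]
        intro X hX hXA
        exact (Finset.mem_sdiff.mp (hAsub hXA)).2 hX
      have hcardC : (C (i + 1)).card = (C i).card + A.card := by
        rw [hCstep, Finset.card_union_of_disjoint hdisj]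
      refine ⟨?_, ?_, ?_⟩
      · rw [hCstep]
        constructor
        · exact Finset.union_subset hPC.1 hAG
        · intro X hX Y hY hle'
          rw [Finset.mem_union] at hX ⊢
          rcases hX with hX | hX
          · exact Or.inl (hPC.2 X hX Y hY hle')
          · by_cases hYC : Y ∈ C i
            · exact Or.inl hYC
            · exact Or.inr (hAclosed X hX Y (Finset.mem_sdiff.mpr ⟨hY, hYC⟩) hle')
      · have := Finset.card_pos.mpr hAne
        omega
      · rw [hcardC, hcovn]
        push_cast
        linarith [hinv, hstep1]
  have hterm : ∃ i, k ≤ 2 * (famCov (C i)).card := by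
    by_contra h
    push_neg at h
    obtain ⟨hPC', hle', _⟩ := main (G.card + 1) (fun j _ => h j)
    have := Finset.card_le_card hPC'.1
    omega
  set l := Nat.find hterm with hl
  have hlt : ∀ j < l, 2 * (famCov (C j)).card < k := by
    intro j hj
    have := Nat.find_min hterm hj
    omega
  obtain ⟨hPCl, _, hinvl⟩ := main l hlt
  refine ⟨l, hlt, Nat.find_spec hterm, hPCl, ?_⟩
  have hcovU : (famCov (C l)).card ≤ U.card := Finset.card_le_card (hcovsub _ hPCl.1)
  have hkpos : (0 : ℝ) < k := by exact_mod_cast hk1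
  rw [div_mul_eq_mul_div, le_div_iff₀ hkpos]
  have hcovUr : ((famCov (C l)).card : ℝ) ≤ (U.card : ℝ) := by exact_mod_cast hcovU
  have hγ0 : (0 : ℝ) ≤ γ := by linarith
  have hO0 : (0 : ℝ) ≤ (OPT : ℝ) := by positivity
  have hn0 : (0 : ℝ) ≤ (U.card : ℝ) := by positivity
  have h1 : 2 * γ * (OPT : ℝ) * ((famCov (C l)).card : ℝ) ≤
      2 * γ * (OPT : ℝ) * (U.card : ℝ) := by
    apply mul_le_mul_of_nonneg_left hcovUr
    positivity
  have h2 : 2 * γ * (OPT : ℝ) * (U.card : ℝ) ≤ 4 * γ * (U.card : ℝ) * (OPT : ℝ) := by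
    nlinarith [mul_nonneg (mul_nonneg hγ0 hn0) hO0]
  linarith [hinvl, h1, h2]
end

section
/- In the constructed Precedence Constrained Set Cover instance, the precedence order is an outforest (every element has at most one immediate predecessor), and the minimum size of a precedence-closed subfamily covering all universum elements {u_X : X ∈ 𝒳} equals the minimum Group Steiner Tree cost, i.e., the minimum of Σ_{e ∈ E(T')} d(e) over subtrees T' of T containing r with V(T') ∩ X ≠ ∅ for every group X ∈ 𝒳. (This is the correctness of the reduction from Group Steiner Tree on trees to Precedence Constrained Set Cover with outforest precedence constraints.) -/
open Finset

/-- One-step generating relation of the precedence order of the constructed instance: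
within the chain of representatives of a vertex, `(v,i) ≼ (v,i+1)`, and across a tree
edge from `u = parent v ≠ r` to `v`: `(u, d u) ≼ (v, 1)`. -/
def stepRel {V : Type*} [DecidableEq V] (r : V) (parent : V → V) (d : V → ℕ) :
    V × ℕ → V × ℕ → Prop :=
  fun p q =>
    (p.1 = q.1 ∧ q.2 = p.2 + 1 ∧ q.2 ≤ d q.1) ∨
    (q.2 = 1 ∧ p = (parent q.1, d (parent q.1)) ∧ parent q.1 ≠ r ∧ q.1 ≠ r)

/-- The precedence order generated by `stepRel`. -/
def precLe {V : Type*} [DecidableEq V] (r : V) (parent : V → V) (d : V → ℕ) :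
    V × ℕ → V × ℕ → Prop :=
  Relation.ReflTransGen (stepRel r parent d)

/-- The family of representative sets, indexed by pairs (v, i), v ≠ r, 1 ≤ i ≤ d(e_v). -/
def reps {V : Type*} [Fintype V] [DecidableEq V] (r : V) (d : V → ℕ) : Finset (V × ℕ) :=
  ((Finset.univ : Finset V).filter (fun v => v ≠ r)).biUnion
    (fun v => (Finset.Icc 1 (d v)).image (fun i => ((v, i) : V × ℕ)))

/-- The set of universum elements covered by the representative (v, i): the groups
containing v if i = d(e_v), and nothing otherwise. -/
def repSet {V : Type*} [DecidableEq V] (d : V → ℕ) (𝒳 : Finset (Finset V)) (p : V × ℕ) :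
    Finset (Finset V) :=
  if p.2 = d p.1 then 𝒳.filter (fun X => p.1 ∈ X) else ∅

/-- `p` is an immediate predecessor of `q` within the family `F`. -/
def ImmPred {V : Type*} (F : Finset (V × ℕ)) (le : V × ℕ → V × ℕ → Prop)
    (p q : V × ℕ) : Prop :=
  p ∈ F ∧ q ∈ F ∧ le p q ∧ p ≠ q ∧
    ∀ z ∈ F, le p z → le z q → z = p ∨ z = q

set_option linter.unusedSectionVars false
section Aux
variable {V : Type*} [DecidableEq V] {r : V} {parent : V → V} {d : V → ℕ}

lemma step_snd_pos {p q : V × ℕ} (h : stepRel r parent d p q) : 1 ≤ q.2 := by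
  rcases h with ⟨_, h2, _⟩ | ⟨h1, _⟩ <;> omega

lemma precLe_snd_pos {p q : V × ℕ} (h : precLe r parent d p q) (hp : 1 ≤ p.2) : 1 ≤ q.2 := by
  induction h with
  | refl => exact hp
  | tail _ hstep _ => exact step_snd_pos hstep

lemma step_unique {a b c : V × ℕ} (ha : stepRel r parent d a c) (hb : stepRel r parent d b c)
    (h1 : 1 ≤ a.2) (h2 : 1 ≤ b.2) : a = b := by
  rcases ha with ⟨ha1, ha2, ha3⟩ | ⟨ha1, ha2, ha3⟩ <;>
    rcases hb with ⟨hb1, hb2, hb3⟩ | ⟨hb1, hb2, hb3⟩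
  · exact Prod.ext (ha1.trans hb1.symm) (by omega)
  · omega
  · omega
  · exact ha2.trans hb2.symm

lemma precLe_comparable {p p' : V × ℕ} (h1 : 1 ≤ p.2) (h2 : 1 ≤ p'.2) :
    ∀ {q : V × ℕ}, precLe r parent d p' q → precLe r parent d p q →
      precLe r parent d p p' ∨ precLe r parent d p' p := by
  intro q h'
  induction h' with
  | refl => exact fun hp => Or.inl hp
  | @tail m c h' hstep ih =>
    intro hp
    rcases Relation.ReflTransGen.cases_tail hp with heq | ⟨z, hpz, hzc⟩
    · exact Or.inr (heq ▸ (h'.tail hstep))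
    · have hz := precLe_snd_pos hpz h1
      have hm := precLe_snd_pos h' h2
      have hzm : z = m := step_unique hzc hstep hz hm
      exact ih (hzm ▸ hpz)

lemma precLe_chain (v : V) : ∀ {j i : ℕ}, i ≤ j → j ≤ d v →
    precLe r parent d (v, i) (v, j) := by
  intro j
  induction j with
  | zero =>
    intro i hij _
    have : i = 0 := by omega
    subst this
    exact Relation.ReflTransGen.refl
  | succ j ih =>
    intro i hij hj
    rcases Nat.eq_or_lt_of_le hij with rfl | hlt
    · exact Relation.ReflTransGen.refl
    · exact (ih (by omega) (by omega)).tail (Or.inl ⟨rfl, rfl, hj⟩)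

lemma fst_mem_of_precLe {W : Finset V} (hW : ∀ v ∈ W, parent v ∈ W) {p q : V × ℕ}
    (h : precLe r parent d q p) : p.1 ∈ W → q.1 ∈ W := by
  induction h with
  | refl => exact fun hp => hp
  | @tail m c h' hstep ih =>
    intro hp
    apply ih
    rcases hstep with ⟨h1, _, _⟩ | ⟨_, h2, _, _⟩
    · rw [h1]; exact hp
    · rw [h2]; exact hW _ hp

variable [Fintype V]

lemma mem_reps {p : V × ℕ} : p ∈ reps r d ↔ p.1 ≠ r ∧ 1 ≤ p.2 ∧ p.2 ≤ d p.1 := by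
  obtain ⟨v, i⟩ := p
  simp only [reps, Finset.mem_biUnion, Finset.mem_image, Finset.mem_Icc, Finset.mem_filter,
    Finset.mem_univ, true_and, Prod.mk.injEq]
  constructor
  · rintro ⟨w, hw, j, ⟨h1, h2⟩, rfl, rfl⟩
    exact ⟨hw, h1, h2⟩
  · rintro ⟨hw, h1, h2⟩
    exact ⟨v, hw, i, ⟨h1, h2⟩, rfl, rfl⟩

lemma mem_chain_biUnion {s : Finset V} {p : V × ℕ} :
    p ∈ s.biUnion (fun v => (Finset.Icc 1 (d v)).image (fun i => ((v, i) : V × ℕ))) ↔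
      p.1 ∈ s ∧ 1 ≤ p.2 ∧ p.2 ≤ d p.1 := by
  obtain ⟨v, i⟩ := p
  simp only [Finset.mem_biUnion, Finset.mem_image, Finset.mem_Icc, Prod.mk.injEq]
  constructor
  · rintro ⟨w, hw, j, ⟨h1, h2⟩, rfl, rfl⟩
    exact ⟨hw, h1, h2⟩
  · rintro ⟨hw, h1, h2⟩
    exact ⟨v, hw, i, ⟨h1, h2⟩, rfl, rfl⟩

lemma card_chain_biUnion (d : V → ℕ) (s : Finset V) :
    (s.biUnion (fun v => (Finset.Icc 1 (d v)).image (fun i => ((v, i) : V × ℕ)))).card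
      = ∑ v ∈ s, d v := by
  rw [Finset.card_biUnion]
  · refine Finset.sum_congr rfl fun v _ => ?_
    rw [Finset.card_image_of_injective _ (fun i j h => ((Prod.mk.injEq _ _ _ _).mp h).2),
      Nat.card_Icc]
    omega
  · intro x _ y _ hxy
    simp only [Finset.disjoint_left, Finset.mem_image, Finset.mem_Icc]
    rintro p ⟨i, _, rfl⟩ ⟨j, _, h⟩
    exact hxy (((Prod.mk.injEq _ _ _ _).mp h).1.symm)

lemma mem_repSet {𝒳 : Finset (Finset V)} {X : Finset V} {p : V × ℕ} :
    X ∈ repSet d 𝒳 p ↔ p.2 = d p.1 ∧ X ∈ 𝒳 ∧ p.1 ∈ X := by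
  unfold repSet
  split <;> simp_all

end Aux

section Main
variable {V : Type*} [Fintype V] [DecidableEq V]

lemma cover_of_W (r : V) (parent : V → V) (d : V → ℕ) (hd : ∀ v : V, v ≠ r → 1 ≤ d v)
    (𝒳 : Finset (Finset V)) (h𝒳 : ∀ X ∈ 𝒳, X.Nonempty ∧ r ∉ X)
    (W : Finset V) (hr : r ∈ W) (hpar : ∀ v ∈ W, parent v ∈ W)
    (hcov : ∀ X ∈ 𝒳, ∃ v ∈ W, v ∈ X) :
    ∃ C : Finset (V × ℕ), C ⊆ reps r d ∧
      (∀ p ∈ C, ∀ q ∈ reps r d, precLe r parent d q p → q ∈ C) ∧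
      (∀ X ∈ 𝒳, ∃ p ∈ C, X ∈ repSet d 𝒳 p) ∧
      C.card = ∑ v ∈ W.erase r, d v := by
  set C := (W.erase r).biUnion (fun v => (Finset.Icc 1 (d v)).image (fun i => ((v, i) : V × ℕ)))
    with hC
  have hmem : ∀ p : V × ℕ, p ∈ C ↔ (p.1 ∈ W ∧ p.1 ≠ r ∧ 1 ≤ p.2 ∧ p.2 ≤ d p.1) := by
    intro p
    rw [hC, mem_chain_biUnion, Finset.mem_erase]
    tauto
  refine ⟨C, ?_, ?_, ?_, ?_⟩
  · intro p hp
    rw [mem_reps]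
    have := (hmem p).mp hp
    tauto
  · intro p hp q hq hle
    have hp' := (hmem p).mp hp
    have hq' := mem_reps.mp hq
    rw [hmem]
    exact ⟨fst_mem_of_precLe hpar hle hp'.1, hq'.1, hq'.2.1, hq'.2.2⟩
  · intro X hX
    obtain ⟨v, hvW, hvX⟩ := hcov X hX
    have hvr : v ≠ r := fun h => (h𝒳 X hX).2 (h ▸ hvX)
    refine ⟨(v, d v), ?_, ?_⟩
    · rw [hmem]
      exact ⟨hvW, hvr, hd v hvr, le_refl _⟩
    · rw [mem_repSet]
      exact ⟨rfl, hX, hvX⟩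
  · rw [hC, card_chain_biUnion]

lemma W_of_cover (r : V) (parent : V → V) (hroot : parent r = r) (d : V → ℕ)
    (hd : ∀ v : V, v ≠ r → 1 ≤ d v) (𝒳 : Finset (Finset V))
    (C : Finset (V × ℕ)) (hsub : C ⊆ reps r d)
    (hclosed : ∀ p ∈ C, ∀ q ∈ reps r d, precLe r parent d q p → q ∈ C)
    (hcov : ∀ X ∈ 𝒳, ∃ p ∈ C, X ∈ repSet d 𝒳 p) :
    ∃ W : Finset V, r ∈ W ∧ (∀ v ∈ W, parent v ∈ W) ∧ (∀ X ∈ 𝒳, ∃ v ∈ W, v ∈ X) ∧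
      (∑ v ∈ W.erase r, d v) ≤ C.card := by
  set s := Finset.univ.filter (fun v => ((v, d v) : V × ℕ) ∈ C) with hs
  have hmem_s : ∀ v : V, v ∈ s ↔ ((v, d v) : V × ℕ) ∈ C := by
    intro v; rw [hs, Finset.mem_filter]; simp
  have hrs : r ∉ s := by
    rw [hmem_s]
    intro h
    exact (mem_reps.mp (hsub h)).1 rfl
  have hsne : ∀ v ∈ s, v ≠ r := fun v hv h => hrs (h ▸ hv)
  refine ⟨insert r s, Finset.mem_insert_self _ _, ?_, ?_, ?_⟩
  · intro v hv
    rcases Finset.mem_insert.mp hv with rfl | hv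
    · rw [hroot]; exact Finset.mem_insert_self _ _
    · have hvC : ((v, d v) : V × ℕ) ∈ C := (hmem_s v).mp hv
      have hvr : v ≠ r := hsne v hv
      by_cases hpv : parent v = r
      · rw [hpv]; exact Finset.mem_insert_self _ _
      · apply Finset.mem_insert_of_mem
        rw [hmem_s]
        apply hclosed _ hvC
        · rw [mem_reps]
          exact ⟨hpv, hd _ hpv, le_refl _⟩
        · exact Relation.ReflTransGen.trans
            (Relation.ReflTransGen.single (Or.inr ⟨rfl, rfl, hpv, hvr⟩))
            (precLe_chain v (hd v hvr) (le_refl _))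
  · intro X hX
    obtain ⟨p, hpC, hpX⟩ := hcov X hX
    obtain ⟨h1, _, h3⟩ := mem_repSet.mp hpX
    refine ⟨p.1, Finset.mem_insert_of_mem ?_, h3⟩
    rw [hmem_s, ← h1]
    exact hpC
  · rw [Finset.erase_insert hrs]
    rw [← card_chain_biUnion d s]
    apply Finset.card_le_card
    intro p hp
    obtain ⟨h1, h2, h3⟩ := mem_chain_biUnion.mp hp
    have hvr : p.1 ≠ r := hsne _ h1
    have : precLe r parent d (p.1, p.2) (p.1, d p.1) := precLe_chain p.1 h3 (le_refl _)
    exact hclosed _ ((hmem_s p.1).mp h1) p (mem_reps.mpr ⟨hvr, h2, h3⟩) this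

end Main

/-- in the constructed PCSC instance the precedence order is an
outforest, and the optimal precedence-closed cover size equals the optimal Group
Steiner Tree cost. -/
theorem stmt19 {V : Type*} [Fintype V] [DecidableEq V]
    (r : V) (parent : V → V)
    (hroot : parent r = r)
    (hconn : ∀ v : V, ∃ n : ℕ, parent^[n] v = r)
    (d : V → ℕ) (hd : ∀ v : V, v ≠ r → 1 ≤ d v)
    (𝒳 : Finset (Finset V)) (h𝒳 : ∀ X ∈ 𝒳, X.Nonempty ∧ r ∉ X) :
    (∀ q ∈ reps r d, ∀ p ∈ reps r d, ∀ p' ∈ reps r d,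
      ImmPred (reps r d) (precLe r parent d) p q →
      ImmPred (reps r d) (precLe r parent d) p' q → p = p') ∧
    sInf {c : ℕ | ∃ C : Finset (V × ℕ), C ⊆ reps r d ∧
        (∀ p ∈ C, ∀ q ∈ reps r d, precLe r parent d q p → q ∈ C) ∧
        (∀ X ∈ 𝒳, ∃ p ∈ C, X ∈ repSet d 𝒳 p) ∧
        C.card = c} =
      sInf {c : ℕ | ∃ W : Finset V, r ∈ W ∧
        (∀ v ∈ W, parent v ∈ W) ∧
        (∀ X ∈ 𝒳, ∃ v ∈ W, v ∈ X) ∧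
        (∑ v ∈ W.erase r, d v) = c} := by
  constructor
  · intro q hq p hp p' hp' hPQ hP'Q
    have h1 : 1 ≤ p.2 := (mem_reps.mp hp).2.1
    have h2 : 1 ≤ p'.2 := (mem_reps.mp hp').2.1
    rcases precLe_comparable h1 h2 hP'Q.2.2.1 hPQ.2.2.1 with h | h
    · rcases hPQ.2.2.2.2 p' hp' h hP'Q.2.2.1 with h' | h'
      · exact h'.symm
      · exact absurd h' hP'Q.2.2.2.1
    · rcases hP'Q.2.2.2.2 p hp h hPQ.2.2.1 with h' | h'
      · exact h'
      · exact absurd h' hPQ.2.2.2.1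
  · set A := {c : ℕ | ∃ C : Finset (V × ℕ), C ⊆ reps r d ∧
        (∀ p ∈ C, ∀ q ∈ reps r d, precLe r parent d q p → q ∈ C) ∧
        (∀ X ∈ 𝒳, ∃ p ∈ C, X ∈ repSet d 𝒳 p) ∧
        C.card = c} with hA
    set B := {c : ℕ | ∃ W : Finset V, r ∈ W ∧
        (∀ v ∈ W, parent v ∈ W) ∧
        (∀ X ∈ 𝒳, ∃ v ∈ W, v ∈ X) ∧
        (∑ v ∈ W.erase r, d v) = c} with hB
    have hBA : B ⊆ A := by
      rintro c ⟨W, hr, hpar, hcov, hsum⟩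
      obtain ⟨C, h1, h2, h3, h4⟩ := cover_of_W r parent d hd 𝒳 h𝒳 W hr hpar hcov
      exact ⟨C, h1, h2, h3, h4.trans hsum⟩
    have hBne : B.Nonempty := by
      refine ⟨∑ v ∈ (Finset.univ : Finset V).erase r, d v, Finset.univ, Finset.mem_univ _,
        fun v _ => Finset.mem_univ _, fun X hX => ?_, rfl⟩
      obtain ⟨v, hv⟩ := (h𝒳 X hX).1
      exact ⟨v, Finset.mem_univ _, hv⟩
    have hAne : A.Nonempty := hBne.mono hBA
    apply le_antisymm
    · exact Nat.sInf_le (hBA (Nat.sInf_mem hBne))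
    · obtain ⟨C, h1, h2, h3, h4⟩ := Nat.sInf_mem hAne
      obtain ⟨W, hw1, hw2, hw3, hw4⟩ := W_of_cover r parent hroot d hd 𝒳 C h1 h2 h3
      exact le_trans (Nat.sInf_le ⟨W, hw1, hw2, hw3, rfl⟩) (h4 ▸ hw4)
end
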